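/- On each coordinate chart 𝒰_j with holomorphic coordinates (ζ_j^1, …, ζ_j^m, t^1, …, t^s) and differentiable coordinates (z_j^1, …, z_j^m, t^1, …, t^s), one has the identity ∂̄_{𝒳/B}( Σ_α d_u(ζ_j^α(z_j, t)) ∂/∂ζ_j^α ) = ρ d_u(φ(t)), where φ(t) = Σ_{α,λ} A_{jα}^λ ∂̄ζ_j^α(z_j,t) ∂/∂z_j^λ with A_{jα}^λ = ((∂ζ_j^α/∂z_j^λ))^{-1} is the local expression of the Beltrami differential. -/

import Mathlib

/-!
Write `J = (∂ζ^μ/∂z^λ)`, so that `J A = 1`. Expanding `d_u(Σ_α A_α^λ ∂̄ζ^α)` by the Leibniz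
rule, the terms `J A ∂̄(d_u ζ)` collapse to `∂̄(d_u ζ^μ)`. The remaining terms `J d_u(A) ∂̄ζ`
are rewritten by differentiating `J A = 1` along `u`: `J d_u(A) = -d_u(J) A`, and
`d_u(J) = (∂(d_u ζ^μ)/∂z^λ)` because `d_u` commutes with `∂/∂z^λ`.
-/

open Matrix Finset

namespace Derivation

variable {R A : Type*} [CommSemiring R] {l n p : Type*} [Fintype n]

theorem map_matrix_mul [CommSemiring A] [Algebra R A] (D : Derivation R A A)
    (M : Matrix l n A) (N : Matrix n p A) :
    (M * N).map D = M.map D * N + M * N.map D := by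
  ext i j
  simp only [map_apply, mul_apply, map_sum, leibniz, smul_eq_mul, sum_add_distrib]
  rw [add_comm]
  congr 1
  exact sum_congr rfl fun _ _ => mul_comm _ _

theorem map_matrix_mul_eq_neg_of_mul_eq_one [CommRing A] [Algebra R A] (D : Derivation R A A)
    [DecidableEq n] {M N : Matrix n n A} (h : M * N = 1) :
    M.map D * N = -(M * N.map D) := by
  have h1 : (1 : Matrix n n A).map D = 0 := by
    ext i j
    by_cases hij : i = j <;> simp [one_apply, hij]
  rw [eq_neg_iff_add_eq_zero, ← map_matrix_mul, h, h1]

end Derivation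

theorem statement_13_general
    (m : ℕ)
    -- the ring of C^{ω∞}-functions on the chart 𝒰_j
    (R : Type*) [CommRing R]
    -- the R-module of (0,1)-forms on the chart
    (Ω : Type*) [AddCommGroup Ω] [Module R Ω]
    -- the fibrewise Dolbeault operator ∂̄ on functions
    (dbar : R →+ Ω)
    -- differentiation d_u along u, on functions and on (0,1)-forms
    (du : R →+ R) (duΩ : Ω →+ Ω)
    (hdu_der : ∀ f g : R, du (f * g) = f * du g + g * du f)
    (hduΩ_der : ∀ (f : R) (w : Ω), duΩ (f • w) = du f • w + f • duΩ w)
    (hdu_dbar : ∀ f : R, duΩ (dbar f) = dbar (du f))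
    -- the coordinate vector fields ∂/∂z_j^λ
    (Dz : Fin m → R →+ R)
    (hDz_du : ∀ (lam : Fin m) (f : R), Dz lam (du f) = du (Dz lam f))
    -- the holomorphic coordinates ζ_j^α, as functions ζ_j^α(z_j, t)
    (ζ : Fin m → R)
    -- A_{jα}^λ = ((∂ζ_j^α/∂z_j^λ))⁻¹ : the inverse of the Jacobian matrix
    (A : Matrix (Fin m) (Fin m) R)
    (hA' : Matrix.of (fun alpha lam => Dz lam (ζ alpha)) * A = 1) :
    -- ∂̄_{𝒳/B}(Σ_α d_u(ζ_j^α) ∂/∂ζ_j^α) = ρ d_u(φ(t)), coefficientwise in the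
    -- frame {∂/∂ζ_j^μ}
    ∀ mu : Fin m,
      dbar (du (ζ mu)) -
          ∑ lam : Fin m, ∑ beta : Fin m,
            (A lam beta * Dz lam (du (ζ mu))) • dbar (ζ beta) =
        ∑ lam : Fin m,
          (Dz lam (ζ mu)) • duΩ (∑ alpha : Fin m, A lam alpha • dbar (ζ alpha)) := by
  intro mu
  set J : Matrix (Fin m) (Fin m) R := Matrix.of fun alpha lam => Dz lam (ζ alpha)
  let D : Derivation ℤ R R := Derivation.mk' du.toIntLinearMap hdu_der
  have hD : ∀ f, D f = du f := fun _ => rfl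
  have hJA : ∀ beta, (J * A.map D) mu beta = -∑ lam, A lam beta * Dz lam (du (ζ mu)) := by
    intro beta
    rw [← neg_eq_iff_eq_neg, ← neg_apply, ← D.map_matrix_mul_eq_neg_of_mul_eq_one hA', mul_apply]
    exact sum_congr rfl fun _ _ => by simp [J, hD, hDz_du, mul_comm]
  have hexpand : ∑ lam, Dz lam (ζ mu) • duΩ (∑ alpha, A lam alpha • dbar (ζ alpha)) =
      ∑ beta, (J * A.map D) mu beta • dbar (ζ beta) +
        ∑ beta, (J * A) mu beta • dbar (du (ζ beta)) := by
    simp only [map_sum, hduΩ_der, hdu_dbar, smul_add, smul_sum, sum_add_distrib, mul_apply,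
      sum_smul, mul_smul]
    rw [sum_comm]
    congr 1
    exact sum_comm
  rw [hexpand, hA']
  simp only [hJA, one_apply, ite_smul, one_smul, zero_smul, sum_ite_eq, mem_univ, if_true,
    neg_smul, sum_smul]
  rw [sum_comm, sum_neg_distrib]
  abel

theorem statement_13
    (m : ℕ)
    -- the ring of C^{ω∞}-functions on the chart 𝒰_j
    (R : Type*) [CommRing R]
    -- the R-module of (0,1)-forms on the chart
    (Ω : Type*) [AddCommGroup Ω] [Module R Ω]
    -- the fibrewise Dolbeault operator ∂̄ on functions
    (dbar : R →+ Ω)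
    (hdbar_der : ∀ f g : R, dbar (f * g) = f • dbar g + g • dbar f)
    -- differentiation d_u along u, on functions and on (0,1)-forms
    (du : R →+ R) (duΩ : Ω →+ Ω)
    (hdu_der : ∀ f g : R, du (f * g) = f * du g + g * du f)
    (hduΩ_der : ∀ (f : R) (w : Ω), duΩ (f • w) = du f • w + f • duΩ w)
    (hdu_dbar : ∀ f : R, duΩ (dbar f) = dbar (du f))
    -- the coordinate vector fields ∂/∂z_j^λ
    (Dz : Fin m → R →+ R)
    (hDz_der : ∀ (lam : Fin m) (f g : R), Dz lam (f * g) = f * Dz lam g + g * Dz lam f)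
    (hDz_du : ∀ (lam : Fin m) (f : R), Dz lam (du f) = du (Dz lam f))
    -- the holomorphic coordinates ζ_j^α, as functions ζ_j^α(z_j, t)
    (ζ : Fin m → R)
    -- A_{jα}^λ = ((∂ζ_j^α/∂z_j^λ))⁻¹ : the inverse of the Jacobian matrix
    (A : Matrix (Fin m) (Fin m) R)
    (hA : A * Matrix.of (fun alpha lam => Dz lam (ζ alpha)) = 1)
    (hA' : Matrix.of (fun alpha lam => Dz lam (ζ alpha)) * A = 1) :
    -- ∂̄_{𝒳/B}(Σ_α d_u(ζ_j^α) ∂/∂ζ_j^α) = ρ d_u(φ(t)), coefficientwise in the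
    -- frame {∂/∂ζ_j^μ}
    ∀ mu : Fin m,
      dbar (du (ζ mu)) -
          ∑ lam : Fin m, ∑ beta : Fin m,
            (A lam beta * Dz lam (du (ζ mu))) • dbar (ζ beta) =
        ∑ lam : Fin m,
          (Dz lam (ζ mu)) • duΩ (∑ alpha : Fin m, A lam alpha • dbar (ζ alpha)) :=
  statement_13_general m R Ω dbar du duΩ hdu_der hduΩ_der hdu_dbar Dz hDz_du ζ A hA'
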